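/- arXiv:1410.4068 — 5 statements merged into one kernel-verified Lean document; each statement's English description precedes it below -/
import Mathlib

section
/- Let f be a finite partial function from ℕ to ℕ, let n, m ≥ 1, let U be an (n+m−1)-branching set of extensions of f (of some length k), and let R ⊆ U. Then either there is an n-branching set of extensions of f contained in R, or there is an m-branching set of extensions of f contained in U \ R. -/
/-- A partial function from ℕ to ℕ, represented via `Option`. -/
def PFn := ℕ → Option ℕ

/-- The domain of a partial function. -/
def PFn.dom (f : PFn) : Set ℕ := {x | f x ≠ none}

/-- `f` has finite domain (i.e. `f ∈ ω^{⊂ω}`). -/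
def PFn.FinDom (f : PFn) : Prop := f.dom.Finite

/-- `PExt f g` means `f ⊆ g` as partial functions. -/
def PExt (f g : PFn) : Prop := ∀ x y, f x = some y → g x = some y

/-- `Branching n f k U`: `U` is an `n`-branching set of extensions of `f` of length `k`. -/
inductive Branching (n : ℕ) : PFn → ℕ → Set PFn → Prop
  | base (f : PFn) (x : ℕ) (U : Set PFn) (hx : f x = none)
      (hmem : ∀ g ∈ U, PExt f g ∧ PFn.dom g = PFn.dom f ∪ {x})
      (hcard : U.ncard = n) : Branching n f 1 U
  | step (f : PFn) (k : ℕ) (U₀ : Set PFn) (Ug : PFn → Set PFn)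
      (h₀ : Branching n f k U₀)
      (hg : ∀ g ∈ U₀, Branching n g 1 (Ug g)) :
      Branching n f (k + 1) (⋃ g ∈ U₀, Ug g)

/-- `U` is an `n`-branching set of extensions of `f` (of some length `k ≥ 1`). -/
def IsBranching (n : ℕ) (f : PFn) (U : Set PFn) : Prop := ∃ k, 1 ≤ k ∧ Branching n f k U

lemma branching_zero_elim {n : ℕ} {f : PFn} {U : Set PFn} (h : Branching n f 0 U) : False := by
  cases h

lemma branching_one_elim {n : ℕ} {f : PFn} {U : Set PFn} (h : Branching n f 1 U) :
    ∃ x, f x = none ∧ (∀ g ∈ U, PExt f g ∧ PFn.dom g = PFn.dom f ∪ {x}) ∧ U.ncard = n := by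
  cases h with
  | base f x U hx hmem hcard => exact ⟨x, hx, hmem, hcard⟩
  | step f k U₀ Ug h₀ hg => exact absurd h₀ branching_zero_elim

/-- The length-1 pigeonhole split. -/
lemma split_one {n m : ℕ} (hn : 1 ≤ n) (hm : 1 ≤ m) {f : PFn} {U R : Set PFn}
    (hU : Branching (n + m - 1) f 1 U) (hR : R ⊆ U) :
    (∃ V ⊆ R, Branching n f 1 V) ∨ (∃ V ⊆ U \ R, Branching m f 1 V) := by
  obtain ⟨x, hx, hmem, hcard⟩ := branching_one_elim hU
  have hUfin : U.Finite := by
    by_contra h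
    rw [Set.Infinite.ncard h] at hcard
    omega
  have hsum : (U \ R).ncard + R.ncard = U.ncard :=
    Set.ncard_diff_add_ncard_of_subset hR hUfin
  by_cases hc : n ≤ R.ncard
  · obtain ⟨V, hVR, hVcard⟩ := Set.exists_subset_card_eq hc
    exact Or.inl ⟨V, hVR, Branching.base f x V hx
      (fun g hg => hmem g (hR (hVR hg))) hVcard⟩
  · have hc' : m ≤ (U \ R).ncard := by omega
    obtain ⟨V, hVR, hVcard⟩ := Set.exists_subset_card_eq hc'
    exact Or.inr ⟨V, hVR, Branching.base f x V hx
      (fun g hg => hmem g (hVR hg).1) hVcard⟩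

lemma key {n m : ℕ} (hn : 1 ≤ n) (hm : 1 ≤ m) {f : PFn} {k : ℕ} {U : Set PFn}
    (hU : Branching (n + m - 1) f k U) :
    ∀ R ⊆ U, (∃ U', U' ⊆ R ∧ IsBranching n f U') ∨
      (∃ U', U' ⊆ U \ R ∧ IsBranching m f U') := by
  induction hU with
  | base f x U hx hmem hcard =>
    intro R hR
    rcases split_one hn hm (Branching.base f x U hx hmem hcard) hR with
      ⟨V, hVR, hV⟩ | ⟨V, hVR, hV⟩
    · exact Or.inl ⟨V, hVR, 1, le_refl 1, hV⟩
    · exact Or.inr ⟨V, hVR, 1, le_refl 1, hV⟩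
  | step f k U₀ Ug h₀ hg ih₀ _ =>
    intro R hR
    classical
    set A : Set PFn := {g | g ∈ U₀ ∧ ∃ V, V ⊆ R ∩ Ug g ∧ Branching n g 1 V} with hA
    have hAsub : A ⊆ U₀ := fun g hg => hg.1
    rcases ih₀ A hAsub with ⟨U', hU'A, k', hk', hU'⟩ | ⟨U', hU'A, k', hk', hU'⟩
    · -- pick the witnesses above each g ∈ U'
      have hch : ∀ g ∈ U', ∃ V, V ⊆ R ∩ Ug g ∧ Branching n g 1 V :=
        fun g hg => (hU'A hg).2
      choose V hV1 hV2 using hch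
      refine Or.inl ⟨⋃ g ∈ U', ⋃ (h : g ∈ U'), V g h, ?_, k' + 1, by omega, ?_⟩
      · intro p hp
        simp only [Set.mem_iUnion] at hp
        obtain ⟨g, hg1, hg2, hp⟩ := hp
        exact (hV1 g hg2 hp).1
      · have := Branching.step (n := n) f k' U' (fun g => ⋃ (h : g ∈ U'), V g h) hU'
          (fun g hg => by
            have heq : (⋃ (h : g ∈ U'), V g h) = V g hg := by
              ext p; simp only [Set.mem_iUnion]; exact ⟨fun ⟨_, hp⟩ => hp, fun hp => ⟨hg, hp⟩⟩
            show Branching n g 1 (⋃ (h : g ∈ U'), V g h)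
            rw [heq]; exact hV2 g hg)
        exact this
    · -- each g ∈ U' is in U₀ \ A, so the m-side of split_one holds above g
      have hch : ∀ g ∈ U', ∃ V, V ⊆ Ug g \ R ∧ Branching m g 1 V := by
        intro g hgU'
        obtain ⟨hgU₀, hgA⟩ := hU'A hgU'
        rcases split_one hn hm (hg g hgU₀) (Set.inter_subset_right (s := R)) with
          ⟨V, hVR, hV⟩ | ⟨V, hVR, hV⟩
        · exact absurd ⟨hgU₀, V, hVR, hV⟩ hgA
        · refine ⟨V, ?_, hV⟩
          intro p hp
          obtain ⟨hp1, hp2⟩ := hVR hp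
          exact ⟨hp1, fun hpR => hp2 ⟨hpR, hp1⟩⟩
      choose V hV1 hV2 using hch
      refine Or.inr ⟨⋃ g ∈ U', ⋃ (h : g ∈ U'), V g h, ?_, k' + 1, by omega, ?_⟩
      · intro p hp
        simp only [Set.mem_iUnion] at hp
        obtain ⟨g, hg1, hg2, hp⟩ := hp
        have := hV1 g hg2 hp
        refine ⟨?_, this.2⟩
        exact Set.mem_biUnion (hU'A hg1).1 this.1
      · have := Branching.step (n := m) f k' U' (fun g => ⋃ (h : g ∈ U'), V g h) hU'
          (fun g hg => by
            have heq : (⋃ (h : g ∈ U'), V g h) = V g hg := by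
              ext p; simp only [Set.mem_iUnion]; exact ⟨fun ⟨_, hp⟩ => hp, fun hp => ⟨hg, hp⟩⟩
            show Branching m g 1 (⋃ (h : g ∈ U'), V g h)
            rw [heq]; exact hV2 g hg)
        exact this

theorem pigeonhole_branching (f : PFn) (hf : f.FinDom) (n m k : ℕ)
    (hn : 1 ≤ n) (hm : 1 ≤ m) (hk : 1 ≤ k) (U R : Set PFn)
    (hU : Branching (n + m - 1) f k U) (hR : R ⊆ U) :
    (∃ U', U' ⊆ R ∧ IsBranching n f U') ∨
    (∃ U', U' ⊆ U \ R ∧ IsBranching m f U') := by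
  exact key hn hm hU R hR
end

section
/- Let f be a finite partial function from ℕ to ℕ, let n, k ≥ 1, and let U be a (k(n−1)+1)-branching set of extensions of f. If U = ⋃_{i<k} U_i, then there is some i < k such that U_i contains an n-branching set of extensions of f. -/
lemma pigeon {S : Set PFn} (hS : S.Finite) {T : ℕ → Set PFn} {k n : ℕ} (hn : 1 ≤ n)
    (hcov : S ⊆ ⋃ i ∈ Finset.range k, T i) (hcard : k * (n - 1) + 1 ≤ S.ncard) :
    ∃ i < k, n ≤ (S ∩ T i).ncard := by
  classical
  by_contra h
  push_neg at h
  set F := hS.toFinset with hF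
  have hsub : F ⊆ (Finset.range k).biUnion (fun i => F.filter (fun g => g ∈ T i)) := by
    intro g hg
    have hgS : g ∈ S := hS.mem_toFinset.mp hg
    have := hcov hgS
    simp only [Set.mem_iUnion, Finset.mem_range] at this
    obtain ⟨i, hi, hgi⟩ := this
    simp only [Finset.mem_biUnion, Finset.mem_range, Finset.mem_filter]
    exact ⟨i, hi, hg, hgi⟩
  have h1 : F.card ≤ ∑ i ∈ Finset.range k, (F.filter (fun g => g ∈ T i)).card :=
    (Finset.card_le_card hsub).trans (Finset.card_biUnion_le)
  have h3 : ∀ i ∈ Finset.range k, (F.filter (fun g => g ∈ T i)).card ≤ n - 1 := by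
    intro i hi
    have heq : (S ∩ T i) = ↑(F.filter (fun g => g ∈ T i)) := by
      ext g
      simp [hF, Set.mem_inter_iff, hS.mem_toFinset]
    have := h i (Finset.mem_range.mp hi)
    rw [heq, Set.ncard_coe_finset] at this
    omega
  have h4 : ∑ i ∈ Finset.range k, (F.filter (fun g => g ∈ T i)).card ≤ k * (n - 1) := by
    calc _ ≤ ∑ _i ∈ Finset.range k, (n - 1) := Finset.sum_le_sum h3
    _ = k * (n - 1) := by simp [Finset.sum_const, mul_comm]
  have h5 : S.ncard = F.card := by
    rw [← hS.coe_toFinset, Set.ncard_coe_finset]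
  omega

lemma refine_one {g : PFn} {V : Set PFn} {k n : ℕ} (hn : 1 ≤ n)
    {Ui : ℕ → Set PFn} (hV : Branching (k * (n - 1) + 1) g 1 V)
    (hcov : V ⊆ ⋃ i ∈ Finset.range k, Ui i) :
    ∃ i < k, ∃ W, W ⊆ Ui i ∧ Branching n g 1 W := by
  cases hV with
  | base _ x _ hx hmem hcard =>
    have hfin : V.Finite := Set.finite_of_ncard_ne_zero (by omega)
    obtain ⟨i, hi, hni⟩ := pigeon hfin hn hcov (by omega)
    obtain ⟨W, hWsub, hWcard⟩ := Set.exists_subset_card_eq hni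
    refine ⟨i, hi, W, fun h hh => (hWsub hh).2, ?_⟩
    exact Branching.base g x W hx (fun h hh => hmem h (hWsub hh).1) hWcard
  | step _ _ U₀ Ug h₀ hg => cases h₀

lemma main_aux {m : ℕ} {f : PFn} {len : ℕ} {U : Set PFn}
    (hU : Branching m f len U) (k n : ℕ) (hn : 1 ≤ n)
    (hm : m = k * (n - 1) + 1)
    (Ui : ℕ → Set PFn) (hcov : U ⊆ ⋃ i ∈ Finset.range k, Ui i) :
    ∃ i < k, ∃ U', U' ⊆ Ui i ∧ IsBranching n f U' := by
  subst hm
  induction hU generalizing Ui with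
  | base f x U hx hmem hcard =>
    obtain ⟨i, hi, W, hWsub, hWbr⟩ :=
      refine_one hn (Branching.base f x U hx hmem hcard) hcov
    exact ⟨i, hi, W, hWsub, 1, le_refl 1, hWbr⟩
  | step f len U₀ Ug h₀ hg IH =>
    classical
    have hch : ∀ g : PFn, ∃ i, ∃ W : Set PFn,
        g ∈ U₀ → i < k ∧ W ⊆ Ui i ∧ Branching n g 1 W := by
      intro g
      by_cases hgU : g ∈ U₀
      · have hsub : Ug g ⊆ ⋃ i ∈ Finset.range k, Ui i := by
          intro h hh
          exact hcov (Set.mem_biUnion hgU hh)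
        obtain ⟨i, hi, W, hWsub, hWbr⟩ := refine_one hn (hg g hgU) hsub
        exact ⟨i, W, fun _ => ⟨hi, hWsub, hWbr⟩⟩
      · exact ⟨0, ∅, fun h => absurd h hgU⟩
    choose c W hcW using hch
    have hcovV : U₀ ⊆ ⋃ i ∈ Finset.range k, {g | g ∈ U₀ ∧ c g = i} := by
      intro g hgU
      exact Set.mem_biUnion (Finset.mem_range.mpr (hcW g hgU).1) ⟨hgU, rfl⟩
    obtain ⟨i, hi, U', hU'sub, ℓ, hℓ, hbr⟩ := IH _ hcovV
    refine ⟨i, hi, ⋃ g ∈ U', W g, ?_, ℓ + 1, by omega, ?_⟩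
    · intro h hh
      simp only [Set.mem_iUnion] at hh
      obtain ⟨g, hgU', hh⟩ := hh
      obtain ⟨hgU₀, hcg⟩ := hU'sub hgU'
      exact hcg ▸ (hcW g hgU₀).2.1 hh
    · exact Branching.step f ℓ U' W hbr (fun g hgU' => (hcW g (hU'sub hgU').1).2.2)

theorem iterated_pigeonhole_branching (f : PFn) (hf : f.FinDom) (n k len : ℕ)
    (hn : 1 ≤ n) (hk : 1 ≤ k) (hlen : 1 ≤ len) (U : Set PFn) (Ui : ℕ → Set PFn)
    (hU : Branching (k * (n - 1) + 1) f len U)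
    (hunion : U = ⋃ i ∈ Finset.range k, Ui i) :
    ∃ i < k, ∃ U', U' ⊆ Ui i ∧ IsBranching n f U' :=
  main_aux hU k n hn rfl Ui (hunion ▸ Set.Subset.rfl)
end

section
/- Let h : ℕ → ℕ be any (partial) function, and say a finite partial function g : ℕ → ℕ avoids h if for every e ∈ dom(g) at which h is defined, g(e) ≠ h(e). If f is a finite partial function avoiding h and U is a 2-branching set of extensions of f (of any length k), then there exists g ∈ U which avoids h. -/
/-- `g` avoids the partial function `h`: wherever both are defined, they differ. -/
def Avoids (h : ℕ → Option ℕ) (g : PFn) : Prop :=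
  ∀ e v, h e = some v → ∀ w, g e = some w → w ≠ v


lemma avoid_of (h : ℕ → Option ℕ) (f g : PFn) (x : ℕ) (hfa : Avoids h f)
    (hext : PExt f g) (hdom : PFn.dom g = PFn.dom f ∪ {x})
    (hx : ∀ v, h x = some v → g x ≠ some v) : Avoids h g := by
  intro e v hv w hw hwv
  by_cases hex : e = x
  · subst hex; exact hx v hv (hwv ▸ hw)
  · have he : e ∈ PFn.dom g := by simp [PFn.dom, hw]
    rw [hdom] at he
    rcases he with he | he
    · obtain ⟨y, hy⟩ := Option.ne_none_iff_exists'.mp he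
      have h2 := hext e y hy
      rw [h2] at hw
      exact hfa e v hv y hy ((Option.some.inj hw).trans hwv)
    · exact hex he

lemma branch_aux (h : ℕ → Option ℕ) (f : PFn) (k : ℕ) (U : Set PFn)
    (hU : Branching 2 f k U) (hfa : Avoids h f) :
    ∃ g ∈ U, Avoids h g := by
  induction hU with
  | base f x U hx hmem hcard =>
    obtain ⟨a, b, hab, hU2⟩ := Set.ncard_eq_two.mp hcard
    subst hU2
    obtain ⟨ha1, ha2⟩ := hmem a (by simp)
    obtain ⟨hb1, hb2⟩ := hmem b (by simp)
    have hax : x ∈ PFn.dom a := by rw [ha2]; right; rfl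
    have hbx : x ∈ PFn.dom b := by rw [hb2]; right; rfl
    obtain ⟨wa, hwa⟩ := Option.ne_none_iff_exists'.mp hax
    obtain ⟨wb, hwb⟩ := Option.ne_none_iff_exists'.mp hbx
    have hoff : ∀ e, e ≠ x → a e = b e := by
      intro e hex
      by_cases hfe : f e = none
      · have hea : e ∉ PFn.dom a := by
          rw [ha2]; rintro (he | he)
          · exact he hfe
          · exact hex he
        have heb : e ∉ PFn.dom b := by
          rw [hb2]; rintro (he | he)
          · exact he hfe
          · exact hex he
        simp only [PFn.dom, Set.mem_setOf_eq, not_not] at hea heb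
        rw [hea, heb]
      · obtain ⟨y, hy⟩ := Option.ne_none_iff_exists'.mp hfe
        rw [ha1 e y hy, hb1 e y hy]
    have hwab : wa ≠ wb := by
      intro hcon
      apply hab
      funext e
      by_cases hex : e = x
      · subst hex; rw [hwa, hwb, hcon]
      · exact hoff e hex
    cases hv : h x with
    | none =>
      exact ⟨a, by simp, avoid_of h f a x hfa ha1 ha2 (fun v hv' => by rw [hv] at hv'; cases hv')⟩
    | some v =>
      by_cases hva : wa = v
      · refine ⟨b, by simp, avoid_of h f b x hfa hb1 hb2 ?_⟩
        intro v' hv' hbc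
        rw [hv] at hv'; cases hv'
        rw [hwb] at hbc; cases hbc
        exact hwab (hva.symm ▸ rfl)
      · refine ⟨a, by simp, avoid_of h f a x hfa ha1 ha2 ?_⟩
        intro v' hv' hac
        rw [hv] at hv'; cases hv'
        rw [hwa] at hac; cases hac
        exact hva rfl
  | step f k U₀ Ug h₀ hg ih ihg =>
    obtain ⟨g, hgU, hga⟩ := ih hfa
    obtain ⟨g', hg'U, hg'a⟩ := ihg g hgU hga
    exact ⟨g', Set.mem_biUnion hgU hg'U, hg'a⟩

theorem branch_gives_avoiding (h : ℕ → Option ℕ) (f : PFn) (hf : f.FinDom)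
    (hfa : Avoids h f) (k : ℕ) (hk : 1 ≤ k) (U : Set PFn)
    (hU : Branching 2 f k U) :
    ∃ g ∈ U, Avoids h g := by
  exact branch_aux h f k U hU hfa
end

section
/- Let f be a finite partial function from ℕ to ℕ, let Ξ be a family of completions of f which blocks at width n, and let U be a 2n-branching set of extensions of f. Then there is a 2-branching set of extensions U* ⊆ U ∩ Ξ such that for every g ∈ U*, the family Ξ↾g blocks at width n (as a family of completions of g). -/
/-- `Xi` is a family of completions of `f`. -/
def FamilyOfCompletions (f : PFn) (Xi : Set PFn) : Prop :=
  (∀ g ∈ Xi, PExt f g) ∧ (∀ g ∈ Xi, ∀ h, PExt f h → PExt h g → h ∈ Xi)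

/-- `Xi` blocks at width `n`: every `n`-branching set of extensions of `f` meets `Xi`. -/
def Blocks (f : PFn) (Xi : Set PFn) (n : ℕ) : Prop :=
  ∀ U, IsBranching n f U → (U ∩ Xi).Nonempty

/-- The members of `Xi` extending `g`. -/
def Restrict (Xi : Set PFn) (g : PFn) : Set PFn := {h ∈ Xi | PExt g h}

/-!
Call `g` good if `Restrict Xi g` blocks at width `n`. In one `2n`-branching level `W` above `p`,
where `Xi` blocks at width `n`, fewer than `n` children are bad: each bad child carries an
`n`-branching set avoiding `Xi`; lengthening these to a common length (harmless, as `Xi` is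
closed downwards) and grafting them onto `n` bad children, which are pairwise incompatible,
yields an `n`-branching set above `p` avoiding `Xi`. So at least `n + 1 ≥ 2` children are good,
and as `Restrict (Restrict Xi g) h = Restrict Xi h`, picking two good children level by level
along `U` produces `Ustar`. A good `g` lies in `Xi`, since `Restrict Xi g` is nonempty and `Xi`
is closed downwards.
-/

def PFn.Compatible (g g' : PFn) : Prop := ∃ q, PExt g q ∧ PExt g' q

namespace PExt

theorem refl (f : PFn) : PExt f f := fun _ _ h => h

theorem trans {f g h : PFn} (hfg : PExt f g) (hgh : PExt g h) : PExt f h :=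
  fun x y hx => hgh x y (hfg x y hx)

theorem eq_of_dom_eq {g g' q : PFn} (hg : PExt g q) (hg' : PExt g' q) (hdom : g.dom = g'.dom) :
    g = g' := by
  funext y
  have hmem : g y ≠ none ↔ g' y ≠ none := Set.ext_iff.mp hdom y
  cases hy : g y with
  | none => simpa [hy, eq_comm] using hmem
  | some a =>
    obtain ⟨b, hb⟩ := Option.ne_none_iff_exists'.mp (hmem.mp (by simp [hy]))
    rw [hb, ← hg y a hy, hg' y b hb]

end PExt

namespace Branching

variable {n k : ℕ} {p : PFn} {U : Set PFn}

theorem pext (h : Branching n p k U) : ∀ g ∈ U, PExt p g := by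
  induction h with
  | base _ _ _ _ hmem _ => exact fun g hg => (hmem g hg).1
  | step _ _ _ _ _ _ ih₀ ihg =>
    simp only [Set.mem_iUnion]
    rintro g ⟨g₀, hg₀, hg⟩
    exact (ih₀ g₀ hg₀).trans (ihg g₀ hg₀ g hg)

theorem finDom (h : Branching n p k U) (hp : p.FinDom) : ∀ g ∈ U, g.FinDom := by
  induction h with
  | base _ x _ _ hmem _ =>
    intro g hg
    rw [PFn.FinDom, (hmem g hg).2]
    exact hp.union (Set.finite_singleton x)
  | step _ _ _ _ _ _ ih₀ ihg =>
    simp only [Set.mem_iUnion]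
    rintro g ⟨g₀, hg₀, hg⟩
    exact ihg g₀ hg₀ (ih₀ hp g₀ hg₀) g hg

theorem one_iff : Branching n p 1 U ↔
    ∃ x, p x = none ∧ (∀ g ∈ U, PExt p g ∧ g.dom = p.dom ∪ {x}) ∧ U.ncard = n := by
  constructor
  · rintro (⟨_, x, _, hx, hmem, hcard⟩ | ⟨_, _, _, _, h₀, _⟩)
    · exact ⟨x, hx, hmem, hcard⟩
    · cases h₀
  · rintro ⟨x, hx, hmem, hcard⟩
    exact base p x U hx hmem hcard

theorem succ_inv (hk : 1 ≤ k) (h : Branching n p (k + 1) U) :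
    ∃ (W : Set PFn) (F : PFn → Set PFn), Branching n p k W ∧
      (∀ q ∈ W, Branching n q 1 (F q)) ∧ U = ⋃ q ∈ W, F q := by
  cases h with
  | base => omega
  | step _ _ W F h₀ hF => exact ⟨W, F, h₀, hF, rfl⟩

theorem one_of_subset {m : ℕ} {W : Set PFn} (hW : Branching m p 1 W) (hUW : U ⊆ W)
    (hcard : U.ncard = n) : Branching n p 1 U := by
  obtain ⟨x, hx, hmem, -⟩ := one_iff.mp hW
  exact one_iff.mpr ⟨x, hx, fun g hg => hmem g (hUW hg), hcard⟩

theorem pairwise_not_compatible_of_one (h : Branching n p 1 U) :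
    U.Pairwise fun g g' => ¬ g.Compatible g' := by
  obtain ⟨x, -, hmem, -⟩ := one_iff.mp h
  rintro g hg g' hg' hne ⟨q, hgq, hg'q⟩
  exact hne (hgq.eq_of_dom_eq hg'q ((hmem g hg).2.trans (hmem g' hg').2.symm))

theorem exists_one (n : ℕ) (hp : p.FinDom) : ∃ U, Branching n p 1 U := by
  obtain ⟨x, hx⟩ := hp.infinite_compl.nonempty
  have hx : p x = none := by simpa [PFn.dom] using hx
  let child : ℕ → PFn := fun j y => if y = x then some j else p y
  have hinj : Function.Injective child := fun a b hab => by simpa [child] using congrFun hab x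
  refine ⟨child '' Set.Iio n, one_iff.mpr ⟨x, hx, ?_, ?_⟩⟩
  · rintro g ⟨j, -, rfl⟩
    refine ⟨fun y b hy => ?_, ?_⟩
    · have hyx : y ≠ x := by rintro rfl; simp [hx] at hy
      simpa [child, hyx] using hy
    · ext y
      by_cases hyx : y = x <;> simp [PFn.dom, child, hyx]
  · rw [Set.ncard_image_of_injective _ hinj, Set.ncard_Iio_nat]

theorem exists_lengthen (h : Branching n p k U) (hp : p.FinDom) {k' : ℕ} (hkk' : k ≤ k') :
    ∃ V, Branching n p k' V ∧ ∀ g ∈ V, ∃ g₀ ∈ U, PExt g₀ g := by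
  induction k', hkk' using Nat.le_induction with
  | base => exact ⟨U, h, fun g hg => ⟨g, hg, PExt.refl g⟩⟩
  | succ k' _ ih =>
    obtain ⟨V, hV, hVU⟩ := ih
    choose! F hF using fun g (hg : g ∈ V) => exists_one n (hV.finDom hp g hg)
    refine ⟨⋃ g ∈ V, F g, step p k' V F hV hF, ?_⟩
    simp only [Set.mem_iUnion]
    rintro g' ⟨g, hg, hg'⟩
    obtain ⟨g₀, hg₀, hg₀g⟩ := hVU g hg
    exact ⟨g₀, hg₀, hg₀g.trans ((hF g hg).pext g' hg')⟩

theorem graft {m : ℕ} {U₀ : Set PFn} (h₀ : Branching n p m U₀)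
    (hinc : U₀.Pairwise fun g g' => ¬ g.Compatible g') {L : ℕ} (hL : 1 ≤ L)
    {V : PFn → Set PFn} (hV : ∀ g ∈ U₀, Branching n g L (V g)) :
    Branching n p (m + L) (⋃ g ∈ U₀, V g) := by
  induction L, hL using Nat.le_induction generalizing V with
  | base => exact step p m U₀ V h₀ hV
  | succ L hL ih =>
    choose! W F hW hF hVWF using fun g (hg : g ∈ U₀) => (hV g hg).succ_inv hL
    let G : PFn → Set PFn := fun h => ⋃ g ∈ U₀, ⋃ (_ : h ∈ W g), F g h
    -- a node of the middle level lies below exactly one `g ∈ U₀`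
    have hG : ∀ g ∈ U₀, ∀ h ∈ W g, G h = F g h := by
      intro g hg h hh
      ext q
      simp only [G, Set.mem_iUnion]
      refine ⟨?_, fun hq => ⟨g, hg, hh, hq⟩⟩
      rintro ⟨g', hg', hh', hq⟩
      obtain rfl : g' = g := by
        by_contra hne
        exact hinc hg' hg hne ⟨h, (hW g' hg').pext h hh', (hW g hg).pext h hh⟩
      exact hq
    have hstep : Branching n p (m + L + 1) (⋃ h ∈ ⋃ g ∈ U₀, W g, G h) := by
      refine step p (m + L) _ G (ih hW) ?_
      simp only [Set.mem_iUnion]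
      rintro h ⟨g, hg, hh⟩
      exact hG g hg h hh ▸ hF g hg h hh
    have hunion : ⋃ g ∈ U₀, V g = ⋃ h ∈ ⋃ g ∈ U₀, W g, G h := by
      ext q
      simp only [Set.mem_iUnion]
      constructor
      · rintro ⟨g, hg, hq⟩
        rw [hVWF g hg, Set.mem_iUnion₂] at hq
        obtain ⟨h, hh, hq⟩ := hq
        exact ⟨h, ⟨g, hg, hh⟩, hG g hg h hh ▸ hq⟩
      · rintro ⟨h, ⟨g, hg, hh⟩, hq⟩
        rw [hG g hg h hh] at hq
        exact ⟨g, hg, hVWF g hg ▸ Set.mem_biUnion hh hq⟩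
    rw [← add_assoc, hunion]
    exact hstep

end Branching

theorem restrict_restrict {Xi : Set PFn} {g g' : PFn} (hgg' : PExt g g') :
    Restrict (Restrict Xi g) g' = Restrict Xi g' :=
  Set.ext fun _ =>
    ⟨fun ⟨⟨hXi, _⟩, hg'⟩ => ⟨hXi, hg'⟩, fun ⟨hXi, hg'⟩ => ⟨⟨hXi, hgg'.trans hg'⟩, hg'⟩⟩

namespace FamilyOfCompletions

variable {n : ℕ} {p : PFn} {Xi : Set PFn}

theorem restrict (hXi : FamilyOfCompletions p Xi) {g : PFn} (hpg : PExt p g) :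
    FamilyOfCompletions g (Restrict Xi g) :=
  ⟨fun _ hh => hh.2, fun _ ⟨hhXi, _⟩ h' hgh' hh'h =>
    ⟨hXi.2 _ hhXi h' (hpg.trans hgh') hh'h, hgh'⟩⟩

theorem mem_of_blocks_restrict (hXi : FamilyOfCompletions p Xi) {g : PFn} (hpg : PExt p g)
    (hg : g.FinDom) (hb : Blocks g (Restrict Xi g) n) : g ∈ Xi := by
  obtain ⟨W, hW⟩ := Branching.exists_one n hg
  obtain ⟨h, -, hhXi, hgh⟩ := hb W ⟨1, le_rfl, hW⟩
  exact hXi.2 h hhXi g hpg hgh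

theorem exists_branching_disjoint_of_not_blocks (hXi : FamilyOfCompletions p Xi)
    (hp : p.FinDom) (hnb : ¬ Blocks p Xi n) :
    ∃ L, ∀ M, L ≤ M → ∃ V, Branching n p M V ∧ Disjoint V Xi := by
  simp only [Blocks, not_forall, Set.not_nonempty_iff_eq_empty] at hnb
  obtain ⟨U, ⟨L, -, hU⟩, hUXi⟩ := hnb
  refine ⟨L, fun M hLM => ?_⟩
  obtain ⟨V, hV, hVU⟩ := hU.exists_lengthen hp hLM
  refine ⟨V, hV, Set.disjoint_left.mpr fun g hgV hgXi => ?_⟩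
  obtain ⟨g₀, hg₀U, hg₀g⟩ := hVU g hgV
  have : g₀ ∈ U ∩ Xi := ⟨hg₀U, hXi.2 g hgXi g₀ (hU.pext g₀ hg₀U) hg₀g⟩
  simp [hUXi] at this

theorem exists_blocks_restrict_of_blocks (hXi : FamilyOfCompletions p Xi) (hp : p.FinDom)
    (hb : Blocks p Xi n) (hn : 1 ≤ n) {S : Set PFn} (hS : Branching n p 1 S) :
    ∃ g ∈ S, Blocks g (Restrict Xi g) n := by
  by_contra! hbad
  obtain ⟨-, -, -, hcard⟩ := Branching.one_iff.mp hS
  choose! L hL using fun g (hg : g ∈ S) =>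
    (hXi.restrict (hS.pext g hg)).exists_branching_disjoint_of_not_blocks
      (hS.finDom hp g hg) (hbad g hg)
  obtain ⟨M, hM⟩ := ((Set.finite_of_ncard_pos (hcard ▸ hn)).image L).bddAbove
  choose! V hV hVXi using fun g (hg : g ∈ S) =>
    hL g hg (M + 1) ((hM ⟨g, hg, rfl⟩).trans M.le_succ)
  obtain ⟨h, hhV, hhXi⟩ := hb _ ⟨1 + (M + 1), by omega,
    hS.graft hS.pairwise_not_compatible_of_one M.succ_pos hV⟩
  obtain ⟨g, hg, hhg⟩ := Set.mem_iUnion₂.mp hhV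
  exact Set.disjoint_left.mp (hVXi g hg) hhg ⟨hhXi, (hV g hg).pext h hhg⟩

theorem exists_branching_two_blocks_restrict (hXi : FamilyOfCompletions p Xi)
    (hp : p.FinDom) (hb : Blocks p Xi n) (hn : 1 ≤ n) {W : Set PFn}
    (hW : Branching (2 * n) p 1 W) :
    ∃ P ⊆ W, Branching 2 p 1 P ∧ ∀ g ∈ P, Blocks g (Restrict Xi g) n := by
  obtain ⟨-, -, -, hcard⟩ := Branching.one_iff.mp hW
  have hWfin : W.Finite := Set.finite_of_ncard_pos (by omega)
  set G := {g ∈ W | Blocks g (Restrict Xi g) n}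
  have hGW : G ⊆ W := fun g hg => hg.1
  have hbad : (W \ G).ncard < n := by
    by_contra! hle
    obtain ⟨S, hSG, hScard⟩ := Set.exists_subset_card_eq hle
    obtain ⟨g, hgS, hgb⟩ := hXi.exists_blocks_restrict_of_blocks hp hb hn
      (hW.one_of_subset (hSG.trans Set.sdiff_subset) hScard)
    exact (hSG hgS).2 ⟨(hSG hgS).1, hgb⟩
  have hG : 2 ≤ G.ncard := by
    have := Set.ncard_sdiff_add_ncard_of_subset hGW hWfin
    omega
  obtain ⟨P, hPG, hPcard⟩ := Set.exists_subset_card_eq hG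
  exact ⟨P, hPG.trans hGW, hW.one_of_subset (hPG.trans hGW) hPcard, fun g hg => (hPG hg).2⟩

end FamilyOfCompletions

theorem Branching.exists_two_subbranching_blocks_restrict {n k : ℕ} (hn : 1 ≤ n) {p : PFn}
    {U : Set PFn} (hU : Branching (2 * n) p k U) (Xi : Set PFn) (hXi : FamilyOfCompletions p Xi)
    (hp : p.FinDom) (hb : Blocks p Xi n) :
    ∃ U' ⊆ U, Branching 2 p k U' ∧ ∀ g ∈ U', Blocks g (Restrict Xi g) n := by
  induction hU generalizing Xi with
  | base p x W hx hmem hcard =>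
    exact hXi.exists_branching_two_blocks_restrict hp hb hn (base p x W hx hmem hcard)
  | step p k U₀ F h₀ hF ih₀ ihF =>
    obtain ⟨U₀', hU₀', hbr, hgood⟩ := ih₀ Xi hXi hp hb
    choose! P hPF hP hPgood using fun g (hg : g ∈ U₀') =>
      ihF g (hU₀' hg) (Restrict Xi g) (hXi.restrict (h₀.pext g (hU₀' hg)))
        (h₀.finDom hp g (hU₀' hg)) (hgood g hg)
    refine ⟨⋃ g ∈ U₀', P g,
      Set.iUnion₂_subset fun g hg => (hPF g hg).trans (Set.subset_biUnion_of_mem (hU₀' hg)),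
      step p k U₀' P hbr hP, ?_⟩
    intro h hh
    obtain ⟨g, hg, hhg⟩ := Set.mem_iUnion₂.mp hh
    rw [← restrict_restrict ((hP g hg).pext h hhg)]
    exact hPgood g hg h hhg

theorem blocking_extension (f : PFn) (hf : f.FinDom) (n : ℕ) (hn : 1 ≤ n)
    (Xi : Set PFn) (hXi : FamilyOfCompletions f Xi) (hb : Blocks f Xi n)
    (k : ℕ) (hk : 1 ≤ k) (U : Set PFn) (hU : Branching (2 * n) f k U) :
    ∃ Ustar : Set PFn, Ustar ⊆ U ∩ Xi ∧ IsBranching 2 f Ustar ∧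
      ∀ g ∈ Ustar, Blocks g (Restrict Xi g) n := by
  obtain ⟨U', hU'U, hU', hgood⟩ := hU.exists_two_subbranching_blocks_restrict hn Xi hXi hf hb
  refine ⟨U', fun g hg => ⟨hU'U hg, ?_⟩, ⟨k, hk, hU'⟩, hgood⟩
  exact hXi.mem_of_blocks_restrict (hU'.pext g hg) (hU'.finDom hf g hg) (hgood g hg)
end

section
/- Let f be a finite partial function, let Ξ be a family of completions of f blocking at width n, and let K be a set of finite partial functions. Suppose that for some m ≥ 1, every m-branching set of extensions of f contains an element not in K. Then Ξ' = Ξ \ K is a family of completions of f which blocks at width n + m − 1. -/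
lemma base_dich {n m : ℕ} (hn : 1 ≤ n) (hm : 1 ≤ m) (f : PFn) (U : Set PFn)
    (hU : Branching (n + m - 1) f 1 U) (P : PFn → Prop) :
    (∃ V ⊆ U, Branching n f 1 V ∧ ∀ h ∈ V, ¬ P h) ∨
    (∃ W ⊆ U, Branching m f 1 W ∧ ∀ h ∈ W, P h) := by
  have hzero : ∀ (q : ℕ) (g : PFn) (W : Set PFn), ¬ Branching q g 0 W := by
    intro q g W h; cases h
  cases hU with
  | step _ k U₀ Ug h₀ hg => exact absurd h₀ (hzero _ _ _)
  | base _ x U hx hmem hcard =>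
    have hfin : U.Finite := by
      by_contra hinf
      rw [Set.Infinite.ncard hinf] at hcard
      omega
    classical
    set A := {h ∈ U | ¬ P h} with hA
    set B := {h ∈ U | P h} with hB
    have hUn : A ∪ B = U := by
      ext h; simp only [hA, hB, Set.mem_union, Set.mem_setOf_eq]; tauto
    have hdisj : Disjoint A B := by
      rw [Set.disjoint_left]; rintro h ⟨_, hP⟩ ⟨_, hP'⟩; exact hP hP'
    have hsum : A.ncard + B.ncard = n + m - 1 := by
      rw [← Set.ncard_union_eq hdisj (hfin.subset (Set.sep_subset _ _))
        (hfin.subset (Set.sep_subset _ _)), hUn, hcard]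
    by_cases hcase : n ≤ A.ncard
    · obtain ⟨V, hVA, hVcard⟩ := Set.exists_subset_card_eq hcase
      refine Or.inl ⟨V, fun h hh => (hVA hh).1, ?_, fun h hh => (hVA hh).2⟩
      exact Branching.base f x V hx (fun g hg => hmem g (hVA hg).1) hVcard
    · have : m ≤ B.ncard := by omega
      obtain ⟨W, hWB, hWcard⟩ := Set.exists_subset_card_eq this
      refine Or.inr ⟨W, fun h hh => (hWB hh).1, ?_, fun h hh => (hWB hh).2⟩
      exact Branching.base f x W hx (fun g hg => hmem g (hWB hg).1) hWcard

lemma dich {n m : ℕ} (hn : 1 ≤ n) (hm : 1 ≤ m) (f : PFn) (k : ℕ) (U : Set PFn)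
    (hU : Branching (n + m - 1) f k U) :
    ∀ P : PFn → Prop,
      (∃ V ⊆ U, Branching n f k V ∧ ∀ h ∈ V, ¬ P h) ∨
      (∃ W ⊆ U, Branching m f k W ∧ ∀ h ∈ W, P h) := by
  induction hU with
  | base f x U hx hmem hcard =>
      intro P
      exact base_dich hn hm f U (Branching.base f x U hx hmem hcard) P
  | step f k U₀ Ug h₀ hg ih =>
      intro P
      classical
      set Q : PFn → Prop :=
        fun g => ¬ ∃ V ⊆ Ug g, Branching n g 1 V ∧ ∀ h ∈ V, ¬ P h with hQ
      rcases ih Q with ⟨V₀, hV₀sub, hV₀br, hV₀⟩ | ⟨W₀, hW₀sub, hW₀br, hW₀⟩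
      · -- each g in V₀ has a good 1-level extension
        have hch : ∀ g ∈ V₀, ∃ V ⊆ Ug g, Branching n g 1 V ∧ ∀ h ∈ V, ¬ P h := by
          intro g hgV
          have := hV₀ g hgV
          simpa [hQ, not_not] using this
        choose! Vf hVfsub hVfbr hVfP using hch
        refine Or.inl ⟨⋃ g ∈ V₀, Vf g, ?_, ?_, ?_⟩
        · intro h hh
          simp only [Set.mem_iUnion] at hh ⊢
          obtain ⟨g, hgV, hhg⟩ := hh
          exact ⟨g, hV₀sub hgV, hVfsub g hgV hhg⟩
        · exact Branching.step f k V₀ Vf hV₀br (fun g hg' => hVfbr g hg')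
        · intro h hh
          simp only [Set.mem_iUnion] at hh
          obtain ⟨g, hgV, hhg⟩ := hh
          exact hVfP g hgV h hhg
      · -- each g in W₀ is bad, so has an m-branching level all in P
        have hch : ∀ g ∈ W₀, ∃ W ⊆ Ug g, Branching m g 1 W ∧ ∀ h ∈ W, P h := by
          intro g hgW
          rcases base_dich hn hm g (Ug g) (hg g (hW₀sub hgW)) P with hgood | hbad
          · exact absurd hgood (hW₀ g hgW)
          · exact hbad
        choose! Wf hWfsub hWfbr hWfP using hch
        refine Or.inr ⟨⋃ g ∈ W₀, Wf g, ?_, ?_, ?_⟩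
        · intro h hh
          simp only [Set.mem_iUnion] at hh ⊢
          obtain ⟨g, hgW, hhg⟩ := hh
          exact ⟨g, hW₀sub hgW, hWfsub g hgW hhg⟩
        · exact Branching.step f k W₀ Wf hW₀br (fun g hg' => hWfbr g hg')
        · intro h hh
          simp only [Set.mem_iUnion] at hh
          obtain ⟨g, hgW, hhg⟩ := hh
          exact hWfP g hgW h hhg

theorem blocks_remove (f : PFn) (hf : f.FinDom) (n m : ℕ) (hn : 1 ≤ n) (hm : 1 ≤ m)
    (Xi K : Set PFn) (hXi : FamilyOfCompletions f Xi) (hb : Blocks f Xi n)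
    (hK : ∀ g h, g ∈ K → PExt f g → PExt g h → h ∈ K)
    (hess : ∀ U, IsBranching m f U → ∃ g ∈ U, g ∉ K) :
    FamilyOfCompletions f (Xi \ K) ∧ Blocks f (Xi \ K) (n + m - 1) := by
  constructor
  · constructor
    · exact fun g hg => hXi.1 g hg.1
    · intro g hg h hfh hhg
      refine ⟨hXi.2 g hg.1 h hfh hhg, fun hK' => hg.2 (hK h g hK' hfh hhg)⟩
  · rintro U ⟨k, hk, hU⟩
    rcases dich hn hm f k U hU (· ∈ K) with ⟨V, hVsub, hVbr, hVK⟩ | ⟨W, hWsub, hWbr, hWK⟩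
    · obtain ⟨g, hgV, hgXi⟩ := hb V ⟨k, hk, hVbr⟩
      exact ⟨g, hVsub hgV, hgXi, hVK g hgV⟩
    · obtain ⟨g, hgW, hgK⟩ := hess W ⟨k, hk, hWbr⟩
      exact absurd (hWK g hgW) hgK
end
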